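/- arXiv:2001.01499 — 3 statements merged into one kernel-verified Lean document; each statement's English description precedes it below -/
import Mathlib

section
/- Let I = t + V_m be an interval of the Rubio de Francia net 𝒩_m in T^ω, with (n−1)² < m ≤ n² and n ≥ 2. Then the diameter of I with respect to the metric d(x,y) = Σ_k |x_k − y_k|/2^k satisfies δ(I) ≤ Σ_{j=1}^{n−1} 2^{−(n−1+j)} + 2^{−(n+1)} + Σ_{j=n+1}^∞ 2^{−j} < 7 · 2^{−(n+1)}. In particular, the diameters of the elements of 𝒩_m tend to 0 uniformly as m → ∞. -/
open MeasureTheory Filter Topology Pointwise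

/-- The infinite torus `T^ω`, the countable product of circles `T = ℝ/ℤ`. -/
abbrev Tomega : Type := ℕ → AddCircle (1 : ℝ)

/-- The open arc of the circle `T = ℝ/ℤ` which is the image of the interval `(a, b) ⊂ ℝ`. -/
def arc (a b : ℝ) : Set (AddCircle (1 : ℝ)) :=
  (fun t : ℝ => (t : AddCircle (1 : ℝ))) '' Set.Ioo a b

/-- The subgroup `R_k = {0, 1/k, …, (k-1)/k}` of `k`-th roots of unity in `T = ℝ/ℤ`. -/
noncomputable def Rsub (k : ℕ) : AddSubgroup (AddCircle (1 : ℝ)) :=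
  AddSubgroup.zmultiples (((k : ℝ)⁻¹ : ℝ) : AddCircle (1 : ℝ))

/-- The exponent pattern of the Rubio de Francia construction: for `m = n² + j` with
`1 ≤ j ≤ 2n+1` (so `n = Nat.sqrt (m-1)`), the `i`-th coordinate (0-indexed) of `H_m` is
`R_{2^(rdfExp m i)}` and the `i`-th edge of `V_m` is `(0, 2^{-(rdfExp m i)})`; coordinates
with exponent `0` carry the trivial subgroup `{0}`, resp. the full circle `T`. -/
def rdfExp (m i : ℕ) : ℕ :=
  let n := Nat.sqrt (m - 1)
  let j := m - n ^ 2
  if j ≤ n then (if i < n then n else if i = n then j else 0)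
  else (if i < j - n then n + 1 else if i ≤ n then n else 0)

/-- The finite subgroup `H_m` of `T^ω` of the Rubio de Francia construction. -/
noncomputable def Hgrp (m : ℕ) : AddSubgroup Tomega :=
  AddSubgroup.pi Set.univ fun i => Rsub (2 ^ rdfExp m i)

/-- The fundamental domain `V_m` for `T^ω / H_m` of the Rubio de Francia construction. -/
def Vset (m : ℕ) : Set Tomega :=
  {x | ∀ i, rdfExp m i ≠ 0 → x i ∈ arc 0 ((2 : ℝ) ^ rdfExp m i)⁻¹}

/-- The metric `d(x,y) = ∑_{n≥1} |x_n − y_n| / 2^n` on `T^ω` (0-indexed coordinates),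
where `‖·‖` is the quotient (circle) distance on `T = ℝ/ℤ`. -/
noncomputable def Dmet (x y : Tomega) : ℝ := ∑' n : ℕ, ‖x n - y n‖ / 2 ^ (n + 1)

/-! ### Auxiliary lemmas -/

lemma norm_circle_le_half (z : AddCircle (1:ℝ)) : ‖z‖ ≤ 2⁻¹ := by
  have := AddCircle.norm_le_half_period (1:ℝ) one_ne_zero (x := z)
  norm_num at this
  linarith

lemma arc_sub_norm (e : ℕ) (he : 1 ≤ e) (a b : AddCircle (1:ℝ))
    (ha : a ∈ arc 0 ((2:ℝ)^e)⁻¹) (hb : b ∈ arc 0 ((2:ℝ)^e)⁻¹) :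
    ‖a - b‖ ≤ ((2:ℝ)⁻¹)^e := by
  obtain ⟨u, hu, rfl⟩ := ha
  obtain ⟨v, hv, rfl⟩ := hb
  have hsub : ((u:AddCircle (1:ℝ)) - v) = ((u - v : ℝ) : AddCircle (1:ℝ)) := by norm_cast
  have h2e : (2:ℝ) ≤ 2^e := by
    calc (2:ℝ) = 2^1 := (pow_one 2).symm
    _ ≤ 2^e := by apply pow_le_pow_right₀ (by norm_num) he
  have hlt : |u - v| < ((2:ℝ)^e)⁻¹ := by
    rw [abs_sub_lt_iff]
    constructor <;> [linarith [hu.1, hu.2, hv.1, hv.2]; linarith [hu.1, hu.2, hv.1, hv.2]]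
  have hle : |u - v| ≤ |(1:ℝ)|/2 := by
    rw [abs_one]
    have : ((2:ℝ)^e)⁻¹ ≤ 2⁻¹ := by
      apply inv_anti₀ (by norm_num) h2e
    linarith
  rw [hsub, (AddCircle.norm_coe_eq_abs_iff (1:ℝ) one_ne_zero).mpr hle]
  rw [inv_pow]
  exact hlt.le

lemma geo_summable (N : ℕ) : Summable (fun k : ℕ => ((2:ℝ)⁻¹)^(N+k)) := by
  simp only [pow_add]
  exact (summable_geometric_of_lt_one (by norm_num) (by norm_num)).mul_left _

lemma geo_tail (N : ℕ) : (∑' k : ℕ, ((2:ℝ)⁻¹)^(N+k)) = 2 * ((2:ℝ)⁻¹)^N := by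
  simp only [pow_add]
  rw [tsum_mul_left, tsum_geometric_of_lt_one (by norm_num) (by norm_num)]
  norm_num
  ring

lemma bound7 (n : ℕ) (hn : 2 ≤ n) :
    (∑ j ∈ Finset.Icc 1 (n - 1), ((2 : ℝ)⁻¹) ^ (n - 1 + j)) +
        (2 : ℝ)⁻¹ ^ (n + 1) + (∑' k : ℕ, ((2 : ℝ)⁻¹) ^ (n + 1 + k)) <
      7 * (2 : ℝ)⁻¹ ^ (n + 1) := by
  have hgeo : (∑' k : ℕ, ((2:ℝ)⁻¹)^(n+1+k)) = 2 * ((2:ℝ)⁻¹)^(n+1) := geo_tail (n+1)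
  have hsum : (∑ j ∈ Finset.Icc 1 (n - 1), ((2 : ℝ)⁻¹) ^ (n - 1 + j)) <
      4 * ((2:ℝ)⁻¹)^(n+1) := by
    obtain ⟨p, rfl⟩ : ∃ p, n = p + 2 := ⟨n - 2, by omega⟩
    have hred : p + 2 - 1 = p + 1 := rfl
    rw [hred]
    have h1 : (∑ j ∈ Finset.Icc 1 (p + 1), ((2 : ℝ)⁻¹) ^ (p + 1 + j)) =
        ((2:ℝ)⁻¹)^(p+2) * ∑ i ∈ Finset.range (p+1), ((2:ℝ)⁻¹)^i := by
      rw [← Finset.Ico_add_one_right_eq_Icc, Finset.sum_Ico_eq_sum_range, Finset.mul_sum]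
      refine Finset.sum_congr (by norm_num) fun i _ => ?_
      rw [← pow_add]
      congr 1
      omega
    have h2 : (∑ i ∈ Finset.range (p+1), ((2:ℝ)⁻¹)^i) = 2 - 2 * ((2:ℝ)⁻¹)^(p+1) := by
      rw [geom_sum_eq (by norm_num)]
      rw [div_eq_iff (by norm_num : (2:ℝ)⁻¹ - 1 ≠ 0)]
      ring
    rw [h1, h2]
    have e1 : ((2:ℝ)⁻¹)^(p+2+1) = ((2:ℝ)⁻¹)^(p+2) * 2⁻¹ := by ring
    have e2 : ((2:ℝ)⁻¹)^(p+2) = ((2:ℝ)⁻¹)^(p+1) * 2⁻¹ := by ring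
    have hp1 : (0:ℝ) < ((2:ℝ)⁻¹)^(p+1) := by positivity
    have hp2 : (0:ℝ) < ((2:ℝ)⁻¹)^(p+2) := by positivity
    nlinarith
  rw [hgeo]
  linarith

/-- The core diameter estimate. -/
lemma core_bound (m n : ℕ) (hn : 2 ≤ n) (hlow : (n - 1) ^ 2 < m) (hhigh : m ≤ n ^ 2)
    (t : Tomega) (x : Tomega) (hx : x ∈ t +ᵥ Vset m) (y : Tomega) (hy : y ∈ t +ᵥ Vset m) :
    Dmet x y ≤ (∑ j ∈ Finset.Icc 1 (n - 1), ((2 : ℝ)⁻¹) ^ (n - 1 + j)) +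
      (2 : ℝ)⁻¹ ^ (n + 1) + ∑' k : ℕ, ((2 : ℝ)⁻¹) ^ (n + 1 + k) := by
  obtain ⟨p, rfl⟩ : ∃ p, n = p + 2 := ⟨n - 2, by omega⟩
  have hred : p + 2 - 1 = p + 1 := rfl
  rw [hred] at hlow ⊢
  have hm0 : 0 < m := (Nat.zero_le _).trans_lt hlow
  -- the value of Nat.sqrt (m-1)
  have hsqrt : Nat.sqrt (m - 1) = p + 1 := by
    have h1 : m - 1 < (p + 2) ^ 2 := lt_of_lt_of_le (Nat.sub_lt hm0 one_pos) hhigh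
    have h2 : Nat.sqrt (m - 1) < p + 2 := Nat.sqrt_lt'.mpr h1
    have h3 : p + 1 ≤ Nat.sqrt (m - 1) := Nat.le_sqrt'.mpr (Nat.le_sub_one_of_lt hlow)
    omega
  have hj1 : 1 ≤ m - (p + 1) ^ 2 := Nat.le_sub_of_add_le (by omega)
  have hj2 : m - (p + 1) ^ 2 ≤ 2 * (p + 1) + 1 := by
    rw [Nat.sub_le_iff_le_add]
    calc m ≤ (p + 2) ^ 2 := hhigh
    _ = 2 * (p + 1) + 1 + (p + 1) ^ 2 := by ring
  have hexpA : ∀ i, i < p + 1 → p + 1 ≤ rdfExp m i := by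
    intro i hi
    simp only [rdfExp, hsqrt]
    generalize hg : m - (p + 1) ^ 2 = j at hj1 hj2 ⊢
    split_ifs <;> omega
  have hexpB : 1 ≤ rdfExp m (p + 1) := by
    simp only [rdfExp, hsqrt]
    generalize hg : m - (p + 1) ^ 2 = j at hj1 hj2 ⊢
    split_ifs <;> omega
  obtain ⟨a, ha, rfl⟩ := hx
  obtain ⟨b, hb, rfl⟩ := hy
  have hco : ∀ i, (t +ᵥ a) i - (t +ᵥ b) i = a i - b i := by
    intro i
    simp only [vadd_eq_add, Pi.add_apply]
    abel
  set B : ℕ → ℝ := fun i => if i < p + 1 then ((2:ℝ)⁻¹)^(p+1) else (2:ℝ)⁻¹ with hBdef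
  have hBnn : ∀ i, 0 ≤ B i := by
    intro i; simp only [hBdef]; split_ifs <;> positivity
  have hBle : ∀ i, B i ≤ 2⁻¹ := by
    intro i; simp only [hBdef]; split_ifs
    · calc ((2:ℝ)⁻¹)^(p+1) ≤ ((2:ℝ)⁻¹)^1 :=
        pow_le_pow_of_le_one (by norm_num) (by norm_num) (by omega)
      _ = 2⁻¹ := pow_one _
    · exact le_refl _
  have hB : ∀ i, ‖a i - b i‖ ≤ B i := by
    intro i
    by_cases hi : i < p + 1
    · simp only [hBdef, if_pos hi]
      have he := hexpA i hi
      have h1e : 1 ≤ rdfExp m i := by omega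
      have hne : rdfExp m i ≠ 0 := by omega
      refine (arc_sub_norm (rdfExp m i) h1e _ _ (ha i hne) (hb i hne)).trans ?_
      exact pow_le_pow_of_le_one (by norm_num) (by norm_num) he
    · by_cases hieq : i = p + 1
      · subst hieq
        simp only [hBdef, if_neg hi]
        have hne : rdfExp m (p+1) ≠ 0 := by omega
        refine (arc_sub_norm (rdfExp m (p+1)) hexpB _ _ (ha _ hne) (hb _ hne)).trans ?_
        calc ((2:ℝ)⁻¹)^(rdfExp m (p+1)) ≤ ((2:ℝ)⁻¹)^1 :=
          pow_le_pow_of_le_one (by norm_num) (by norm_num) hexpB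
        _ = 2⁻¹ := pow_one _
      · simp only [hBdef, if_neg hi]
        exact norm_circle_le_half _
  set g : ℕ → ℝ := fun i => B i * ((2:ℝ)⁻¹)^(i+1) with hgdef
  have hsum1 : Summable (fun i : ℕ => ((2:ℝ)⁻¹)^(i+1)) := by
    simpa [add_comm] using geo_summable 1
  have hg_le : ∀ i, g i ≤ ((2:ℝ)⁻¹)^(i+1) := by
    intro i
    have h1 : B i ≤ 1 := (hBle i).trans (by norm_num)
    have h2 : B i * ((2:ℝ)⁻¹)^(i+1) ≤ 1 * ((2:ℝ)⁻¹)^(i+1) :=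
      mul_le_mul_of_nonneg_right h1 (by positivity)
    rw [one_mul] at h2
    exact h2
  have hgnn : ∀ i, 0 ≤ g i := fun i => mul_nonneg (hBnn i) (by positivity)
  have hgsum : Summable g := Summable.of_nonneg_of_le hgnn hg_le hsum1
  have hf_le_g : ∀ i, ‖(t +ᵥ a) i - (t +ᵥ b) i‖ / 2 ^ (i + 1) ≤ g i := by
    intro i
    rw [hco i, div_eq_mul_inv, ← inv_pow]
    exact mul_le_mul_of_nonneg_right (hB i) (by positivity)
  have hfsum : Summable (fun i : ℕ => ‖(t +ᵥ a) i - (t +ᵥ b) i‖ / 2 ^ (i + 1)) := by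
    refine Summable.of_nonneg_of_le (fun i => by positivity)
      (fun i => (hf_le_g i).trans (hg_le i)) hsum1
  have hA : ∑ i ∈ Finset.range (p + 1), g i =
      ∑ j ∈ Finset.Icc 1 (p + 1), ((2 : ℝ)⁻¹) ^ (p + 1 + j) := by
    rw [← Finset.Ico_add_one_right_eq_Icc, Finset.sum_Ico_eq_sum_range]
    refine Finset.sum_congr (by norm_num) fun i hi => ?_
    have hi' : i < p + 1 := by have := Finset.mem_range.mp hi; omega
    simp only [hgdef, hBdef]
    rw [if_pos hi', ← pow_add]
    congr 1
    omega
  have hgp1 : g (p + 1) = ((2:ℝ)⁻¹)^(p + 2 + 1) := by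
    simp only [hgdef, hBdef, if_neg (lt_irrefl (p+1))]
    ring
  have htail : (∑' i : ℕ, g (i + (p + 2))) ≤ ∑' k : ℕ, ((2 : ℝ)⁻¹) ^ (p + 2 + 1 + k) := by
    refine Summable.tsum_le_tsum (fun i => ?_) ((summable_nat_add_iff (p+2)).mpr hgsum)
      (geo_summable (p + 2 + 1))
    have hni : ¬ (i + (p + 2) < p + 1) := by omega
    simp only [hgdef, hBdef, if_neg hni]
    calc (2:ℝ)⁻¹ * ((2:ℝ)⁻¹)^(i + (p + 2) + 1) = ((2:ℝ)⁻¹)^(i + p + 4) := by ring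
    _ ≤ ((2:ℝ)⁻¹)^(p + 2 + 1 + i) :=
      pow_le_pow_of_le_one (by norm_num) (by norm_num) (by omega)
  calc Dmet (t +ᵥ a) (t +ᵥ b) ≤ ∑' i, g i := Summable.tsum_le_tsum hf_le_g hfsum hgsum
  _ = ∑ i ∈ Finset.range (p + 2), g i + ∑' i : ℕ, g (i + (p + 2)) :=
      (Summable.sum_add_tsum_nat_add _ hgsum).symm
  _ = (∑ j ∈ Finset.Icc 1 (p + 1), ((2 : ℝ)⁻¹) ^ (p + 1 + j) + ((2:ℝ)⁻¹)^(p + 2 + 1))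
        + ∑' i : ℕ, g (i + (p + 2)) := by
      rw [Finset.sum_range_succ, hA, hgp1]
  _ ≤ (∑ j ∈ Finset.Icc 1 (p + 1), ((2 : ℝ)⁻¹) ^ (p + 1 + j) + ((2:ℝ)⁻¹)^(p + 2 + 1))
        + ∑' k : ℕ, ((2 : ℝ)⁻¹) ^ (p + 2 + 1 + k) := by linarith [htail]

/-- Diameter bound for the nets of the Rubio de Francia construction: if
`(n−1)² < m ≤ n²` with `n ≥ 2`, then every interval `I = t + V_m` of the net `𝒩_m` has
`d`-diameter at most `∑_{j=1}^{n−1} 2^{−(n−1+j)} + 2^{−(n+1)} + ∑_{j=n+1}^∞ 2^{−j}`, which is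
less than `7·2^{−(n+1)}`; in particular the diameters of the elements of `𝒩_m` tend to `0`
uniformly as `m → ∞`. -/
theorem rdf_net_diameter :
    (∀ m n : ℕ, 2 ≤ n → (n - 1) ^ 2 < m → m ≤ n ^ 2 → ∀ t : Tomega,
      ∀ x ∈ t +ᵥ Vset m, ∀ y ∈ t +ᵥ Vset m,
        Dmet x y ≤ (∑ j ∈ Finset.Icc 1 (n - 1), ((2 : ℝ)⁻¹) ^ (n - 1 + j)) +
          (2 : ℝ)⁻¹ ^ (n + 1) + ∑' k : ℕ, ((2 : ℝ)⁻¹) ^ (n + 1 + k)) ∧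
    (∀ n : ℕ, 2 ≤ n →
      (∑ j ∈ Finset.Icc 1 (n - 1), ((2 : ℝ)⁻¹) ^ (n - 1 + j)) +
          (2 : ℝ)⁻¹ ^ (n + 1) + (∑' k : ℕ, ((2 : ℝ)⁻¹) ^ (n + 1 + k)) <
        7 * (2 : ℝ)⁻¹ ^ (n + 1)) ∧
    (∀ ε : ℝ, 0 < ε → ∃ M : ℕ, ∀ m ≥ M, ∀ t ∈ Hgrp m,
      ∀ x ∈ t +ᵥ Vset m, ∀ y ∈ t +ᵥ Vset m, Dmet x y < ε) := by
  refine ⟨fun m n hn hlow hhigh t x hx y hy => core_bound m n hn hlow hhigh t x hx y hy,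
    fun n hn => bound7 n hn, ?_⟩
  intro ε hε
  obtain ⟨N, hN⟩ := exists_pow_lt_of_lt_one (show (0:ℝ) < ε/7 by linarith)
    (show (2:ℝ)⁻¹ < 1 by norm_num)
  refine ⟨N ^ 2 + 2, fun m hm t _ x hx y hy => ?_⟩
  have hm2 : 2 ≤ m := le_trans (Nat.le_add_left 2 (N^2)) hm
  set n := Nat.sqrt (m - 1) + 1 with hndef
  have hn1 : n - 1 = Nat.sqrt (m - 1) := by omega
  have hn2 : 2 ≤ n := by
    have : 1 ≤ Nat.sqrt (m - 1) := Nat.le_sqrt.mpr (by omega)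
    omega
  have hlow : (n - 1) ^ 2 < m := by
    rw [hn1]
    exact lt_of_le_of_lt (Nat.sqrt_le' _) (Nat.sub_lt (by omega) one_pos)
  have hhigh : m ≤ n ^ 2 := Nat.le_of_pred_lt (Nat.lt_succ_sqrt' (m - 1))
  have hNn : N + 1 ≤ n := by
    have h1 : N ^ 2 ≤ m - 1 := by
      have := Nat.le_sub_one_of_lt (show N ^ 2 + 1 < m by omega)
      omega
    have := Nat.le_sqrt'.mpr h1
    omega
  calc Dmet x y ≤ (∑ j ∈ Finset.Icc 1 (n - 1), ((2 : ℝ)⁻¹) ^ (n - 1 + j)) +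
      (2 : ℝ)⁻¹ ^ (n + 1) + ∑' k : ℕ, ((2 : ℝ)⁻¹) ^ (n + 1 + k) :=
    core_bound m n hn2 hlow hhigh t x hx y hy
  _ < 7 * (2 : ℝ)⁻¹ ^ (n + 1) := bound7 n hn2
  _ ≤ 7 * (2 : ℝ)⁻¹ ^ N := by
    have : ((2:ℝ)⁻¹) ^ (n + 1) ≤ ((2:ℝ)⁻¹) ^ N :=
      pow_le_pow_of_le_one (by norm_num) (by norm_num) (by omega)
    linarith
  _ < ε := by linarith
end

section
/- The basis ℛ₀ = {t + V_m : m ∈ ℕ, t ∈ H_m} differentiates L¹(T^ω): for every f ∈ L¹(T^ω) and almost every x ∈ T^ω, if I_x^{(m)} denotes the unique element of the net 𝒩_m = {t + V_m : t ∈ H_m} containing x, then lim_{m→∞} (1/m(I_x^{(m)})) ∫_{I_x^{(m)}} f dm = f(x). -/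
open MeasureTheory Filter Topology Pointwise

/-! The σ-algebras `ℱ m` generated by the nets `𝒩_1, …, 𝒩_{m+1}` form a filtration, and every
cell of `𝒩_{m+1}` is an atom of `ℱ m`; hence `𝔼[f | ℱ m]` is constant on that cell, where it
equals the average of `f`. By Lévy's upward theorem these averages converge a.e. to
`𝔼[f | ⨆ m, ℱ m]`. The cells shrink in every coordinate and the points with a dyadic coordinate
form a null set, so the preimage of an open set under a coordinate differs from a countable union
of cells by a null set. Thus every Borel set is a.e. equal to a `⨆ m, ℱ m`-measurable set, and
`𝔼[f | ⨆ m, ℱ m] = f` a.e. -/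

local notation "𝕋" => AddCircle (1 : ℝ)

section Conditional

variable {α : Type*}

@[reducible]
def aeClosure (m : MeasurableSpace α) {m0 : MeasurableSpace α} (μ : Measure[m0] α) :
    MeasurableSpace α where
  MeasurableSet' s := ∃ t, MeasurableSet[m] t ∧ s =ᵐ[μ] t
  measurableSet_empty := ⟨∅, @MeasurableSet.empty _ m, EventuallyEq.rfl⟩
  measurableSet_compl _ := fun ⟨t, ht, hst⟩ => ⟨tᶜ, ht.compl, hst.compl⟩
  measurableSet_iUnion _ hs := by
    choose t ht hst using hs
    exact ⟨⋃ i, t i, MeasurableSet.iUnion ht, Filter.EventuallyEq.countable_iUnion hst⟩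

variable {m m0 : MeasurableSpace α} {μ : Measure[m0] α}

theorem condExp_ae_eq_self_of_le_aeClosure {E : Type*} [NormedAddCommGroup E]
    [NormedSpace ℝ E] [CompleteSpace E] (hm : m ≤ m0) [SigmaFinite (μ.trim hm)]
    (hle : m0 ≤ aeClosure m μ) {f : α → E} (hf : Integrable f μ) : μ[f|m] =ᵐ[μ] f := by
  have := SigmaFinite.of_trim (μ := μ) hm
  refine ae_eq_of_forall_setIntegral_eq_of_sigmaFinite
    (fun _ _ _ => integrable_condExp.integrableOn) (fun _ _ _ => hf.integrableOn)
    fun s hs _ => ?_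
  obtain ⟨t, ht, hst⟩ := hle s hs
  rw [setIntegral_congr_set hst, setIntegral_congr_set hst]
  exact setIntegral_condExp hm hf ht

theorem condExp_apply_eq_average_of_atom (hm : m ≤ m0) [SigmaFinite (μ.trim hm)]
    {f : α → ℝ} (hf : Integrable f μ) {s : Set α} (hs : MeasurableSet[m] s) (hμs : μ s ≠ 0)
    (hμs' : μ s ≠ ⊤)
    (hatom : ∀ A, MeasurableSet[m] A → s ⊆ A ∨ Disjoint s A) {x : α} (hx : x ∈ s) :
    μ[f|m] x = (μ s).toReal⁻¹ * ∫ y in s, f y ∂μ := by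
  have hconst : ∀ y ∈ s, μ[f|m] y = μ[f|m] x := by
    rcases hatom _ (stronglyMeasurable_condExp.measurable (measurableSet_singleton (μ[f|m] x)))
      with h | h
    · exact fun y hy => h hy
    · exact absurd rfl (Set.disjoint_left.1 h hx)
  have hint := setIntegral_condExp hm hf hs
  rw [setIntegral_congr_fun (hm _ hs) hconst, setIntegral_const, smul_eq_mul,
    measureReal_def] at hint
  rw [← hint, inv_mul_cancel_left₀ (ENNReal.toReal_ne_zero.2 ⟨hμs, hμs'⟩)]

end Conditional

noncomputable def dyadicPt (e k : ℕ) : 𝕋 := ((k / 2 ^ e : ℝ) : 𝕋)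

def dyadicArc (e k : ℕ) : Set 𝕋 := arc (k / 2 ^ e) ((k + 1) / 2 ^ e)

lemma isOpen_arc (a b : ℝ) : IsOpen (arc a b) :=
  QuotientAddGroup.isOpenMap_coe _ isOpen_Ioo

lemma arc_nonempty {a b : ℝ} (h : a < b) : (arc a b).Nonempty :=
  (Set.nonempty_Ioo.2 h).image _

lemma vadd_arc (c a b : ℝ) : (c : 𝕋) +ᵥ arc a b = arc (c + a) (c + b) := by
  rw [arc, arc, ← Set.image_vadd, Set.image_image, ← Set.image_const_add_Ioo, Set.image_image]
  rfl

lemma arc_subset_ball {a b : ℝ} {x : 𝕋} (hx : x ∈ arc a b) : arc a b ⊆ Metric.ball x (b - a) := by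
  obtain ⟨u, hu, rfl⟩ := hx
  rintro _ ⟨v, hv, rfl⟩
  rw [Metric.mem_ball, dist_eq_norm, ← AddCircle.coe_sub]
  calc ‖((v - u : ℝ) : 𝕋)‖ ≤ ‖v - u‖ := QuotientAddGroup.norm_mk_le_norm
    _ < b - a := by rw [Real.norm_eq_abs, abs_lt]; constructor <;> linarith [hu.1, hu.2, hv.1, hv.2]

lemma dyadicPt_vadd_arc (e k : ℕ) : dyadicPt e k +ᵥ arc 0 (2 ^ e)⁻¹ = dyadicArc e k := by
  rw [dyadicPt, vadd_arc, dyadicArc, add_zero, add_div, one_div]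

lemma nsmul_Rsub_gen_eq_dyadicPt (e k : ℕ) :
    k • ((((2 ^ e : ℕ) : ℝ)⁻¹ : ℝ) : 𝕋) = dyadicPt e k := by
  rw [← AddCircle.coe_nsmul, dyadicPt, nsmul_eq_mul, div_eq_mul_inv, Nat.cast_pow, Nat.cast_ofNat]

lemma dyadicPt_mem_Rsub (e k : ℕ) : dyadicPt e k ∈ Rsub (2 ^ e) :=
  nsmul_Rsub_gen_eq_dyadicPt e k ▸ nsmul_mem (AddSubgroup.mem_zmultiples _) k

lemma exists_eq_dyadicPt_of_mem_Rsub {e : ℕ} {r : 𝕋} (hr : r ∈ Rsub (2 ^ e)) :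
    ∃ k < 2 ^ e, r = dyadicPt e k := by
  have hord : addOrderOf ((((2 ^ e : ℕ) : ℝ)⁻¹ : ℝ) : 𝕋) = 2 ^ e := by
    rw [← one_div, AddCircle.addOrderOf_period_div (by positivity)]
  obtain ⟨z, rfl⟩ := AddSubgroup.mem_zmultiples_iff.1 hr
  have hpos : (0 : ℤ) < (2 ^ e : ℕ) := by positivity
  refine ⟨(z % (2 ^ e : ℕ)).toNat, by omega, ?_⟩
  rw [← mod_addOrderOf_zsmul, hord, ← nsmul_Rsub_gen_eq_dyadicPt, ← natCast_zsmul,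
    Int.toNat_of_nonneg (Int.emod_nonneg _ hpos.ne')]

lemma dyadicArc_disjoint {e k k' : ℕ} (hk : k < 2 ^ e) (hk' : k' < 2 ^ e) (hne : k ≠ k') :
    Disjoint (dyadicArc e k) (dyadicArc e k') := by
  have h2 : (0 : ℝ) < 2 ^ e := by positivity
  have hinj : Set.InjOn (fun t : ℝ => (t : 𝕋)) (Set.Ico 0 (0 + 1)) := fun u hu v hv h =>
    (AddCircle.coe_eq_coe_iff_of_mem_Ico hu hv).1 h
  have hsub {j : ℕ} (hj : j < 2 ^ e) :
      Set.Ioo ((j : ℝ) / 2 ^ e) ((j + 1) / 2 ^ e) ⊆ Set.Ico 0 (0 + 1) := by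
    have : (j : ℝ) + 1 ≤ 2 ^ e := by exact_mod_cast hj
    refine Set.Ioo_subset_Ico_self.trans (Set.Ico_subset_Ico (by positivity) ?_)
    rwa [zero_add, div_le_one h2]
  rw [Set.disjoint_iff_inter_eq_empty, dyadicArc, dyadicArc, arc, arc,
    ← hinj.image_inter (hsub hk) (hsub hk'), Set.image_eq_empty, Set.eq_empty_iff_forall_notMem]
  rintro y ⟨⟨h1, h2'⟩, h3, h4⟩
  rw [div_lt_iff₀ h2] at h1 h3
  rw [lt_div_iff₀ h2] at h2' h4
  have hlt : k < k' + 1 := by exact_mod_cast (by linarith : (k : ℝ) < k' + 1)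
  have hlt' : k' < k + 1 := by exact_mod_cast (by linarith : (k' : ℝ) < k + 1)
  omega

lemma dyadicArc_subset_dyadicArc_div {e e' : ℕ} (he : e ≤ e') (k : ℕ) :
    dyadicArc e' k ⊆ dyadicArc e (k / 2 ^ (e' - e)) := by
  set d := e' - e
  have hd : (0 : ℝ) < 2 ^ d := by positivity
  have hsplit (a : ℝ) : a / 2 ^ e' = a / 2 ^ d / 2 ^ e := by
    rw [div_div, ← pow_add, Nat.sub_add_cancel he]
  have hup : k + 1 ≤ (k / 2 ^ d + 1) * 2 ^ d := by
    have := Nat.lt_div_mul_add (a := k) (Nat.two_pow_pos d)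
    rw [add_mul, one_mul]
    omega
  refine Set.image_mono (Set.Ioo_subset_Ioo ?_ ?_)
  · rw [hsplit]
    gcongr
    exact_mod_cast (Nat.cast_div_le : ((k / 2 ^ d : ℕ) : ℝ) ≤ k / (2 ^ d : ℕ))
  · rw [hsplit]
    gcongr
    rw [div_le_iff₀ hd]
    exact_mod_cast hup

lemma exists_mem_dyadicArc {x : 𝕋} (hx : x ∉ Set.range (Function.uncurry dyadicPt)) (e : ℕ) :
    ∃ k, x ∈ dyadicArc e k := by
  obtain ⟨⟨r, hr0, _⟩, rfl⟩ := (AddCircle.equivIco 1 0).symm.surjective x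
  have h2 : (0 : ℝ) < 2 ^ e := by positivity
  set k := ⌊r * 2 ^ e⌋₊
  have hk : (k : ℝ) < r * 2 ^ e := by
    refine (Nat.floor_le (by positivity)).lt_of_ne fun h => hx ⟨(e, k), ?_⟩
    rw [Function.uncurry_apply_pair, dyadicPt, h, mul_div_cancel_right₀ _ h2.ne']
    rfl
  refine ⟨k, r, ⟨(div_lt_iff₀ h2).2 hk, (lt_div_iff₀ h2).2 (Nat.lt_floor_add_one _)⟩, rfl⟩

lemma eventually_dyadicArc_subset {U : Set 𝕋} (hU : IsOpen U) {x : 𝕋} (hx : x ∈ U) :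
    ∀ᶠ e in atTop, ∀ k, x ∈ dyadicArc e k → dyadicArc e k ⊆ U := by
  obtain ⟨ε, hε, hball⟩ := Metric.isOpen_iff.1 hU x hx
  obtain ⟨e₀, he₀⟩ := exists_pow_lt_of_lt_one hε (by norm_num : (1 / 2 : ℝ) < 1)
  filter_upwards [eventually_ge_atTop e₀] with e he k hxk
  refine (arc_subset_ball hxk).trans (Metric.ball_subset_ball ?_) |>.trans hball
  calc ((k : ℝ) + 1) / 2 ^ e - k / 2 ^ e = (1 / 2) ^ e := by
        rw [← sub_div, add_sub_cancel_left, one_div_pow]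
    _ ≤ (1 / 2) ^ e₀ := pow_le_pow_of_le_one (by norm_num) (by norm_num) he
    _ ≤ ε := he₀.le

-- Makes additive Haar measures on the circle atomless, via `IsAddHaarMeasure.nullSingletonClass`.
instance : Nontrivial 𝕋 :=
  ⟨⟨((1 / 2 : ℝ) : 𝕋), 0, fun h => by
    have := AddCircle.addOrderOf_period_div (p := (1 : ℝ)) (n := 2) two_pos
    rw [Nat.cast_ofNat, h, addOrderOf_zero] at this
    exact absurd this (by norm_num)⟩⟩

instance : (𝓝[≠] (0 : 𝕋)).NeBot :=
  ConnectedSpace.neBot_nhdsWithin_compl_of_nontrivial_of_t1space 0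

lemma lt_of_rdfExp_ne_zero {m i : ℕ} (h : rdfExp m i ≠ 0) : i < m := by
  have := Nat.sqrt_le_self (m - 1)
  simp only [rdfExp] at h
  split_ifs at h <;> omega

lemma sqrt_sq_le_and_lt (k : ℕ) : Nat.sqrt k ^ 2 ≤ k ∧ k < Nat.sqrt k ^ 2 + 2 * Nat.sqrt k + 1 :=
  ⟨Nat.sqrt_le' k, by linarith [Nat.lt_succ_sqrt' k]⟩

lemma rdfExp_le_succ (m i : ℕ) : rdfExp m i ≤ rdfExp (m + 1) i := by
  rcases m with _ | m
  · simp [rdfExp]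
  simp only [rdfExp, Nat.add_sub_cancel]
  have hm := sqrt_sq_le_and_lt m
  have hm' := sqrt_sq_le_and_lt (m + 1)
  have hle : Nat.sqrt m ≤ Nat.sqrt (m + 1) := Nat.sqrt_le_sqrt (Nat.le_succ m)
  have hstep : Nat.sqrt (m + 1) ≤ Nat.sqrt m + 1 := Nat.sqrt_succ_le_succ_sqrt m
  generalize Nat.sqrt (m + 1) = s' at *
  generalize Nat.sqrt m = s at *
  obtain rfl | rfl : s' = s ∨ s' = s + 1 := by omega
  · split_ifs <;> omega
  · have : (s + 1) ^ 2 = s ^ 2 + 2 * s + 1 := by ring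
    rw [this] at *
    split_ifs <;> omega

lemma rdfExp_mono (i : ℕ) : Monotone (rdfExp · i) :=
  monotone_nat_of_le_succ fun m => rdfExp_le_succ m i

lemma tendsto_rdfExp (i : ℕ) : Tendsto (rdfExp · i) atTop atTop := by
  refine tendsto_atTop_atTop.2 fun b => ⟨(b + i + 1) ^ 2 + 1, fun m hm => ?_⟩
  have hsqrt : b + i + 1 ≤ Nat.sqrt (m - 1) := Nat.le_sqrt'.2 (by omega)
  have : Nat.sqrt (m - 1) ≤ rdfExp m i := by
    simp only [rdfExp]
    split_ifs <;> omega
  omega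

def dyadicCoordSet : Set Tomega :=
  ⋃ i, (fun x : Tomega => x i) ⁻¹' Set.range (Function.uncurry dyadicPt)

lemma measure_preimage_eval_eq_zero (μ : Measure Tomega) [μ.IsAddHaarMeasure] (i : ℕ)
    {D : Set 𝕋} (hD : D.Countable) : μ ((fun x : Tomega => x i) ⁻¹' D) = 0 := by
  have : (μ.map (fun x : Tomega => x i)).IsAddHaarMeasure :=
    Measure.isAddHaarMeasure_map μ (Pi.evalAddMonoidHom _ i) (continuous_apply i)
      (Function.surjective_eval i) (by simp)
  rw [← Measure.map_apply (measurable_pi_apply i) hD.measurableSet]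
  exact hD.measure_zero _

lemma measure_dyadicCoordSet (μ : Measure Tomega) [μ.IsAddHaarMeasure] : μ dyadicCoordSet = 0 :=
  measure_iUnion_null fun i => measure_preimage_eval_eq_zero μ i (Set.countable_range _)

def rdfCell (m : ℕ) (κ : ℕ → ℕ) : Set Tomega :=
  Set.pi {i | rdfExp m i ≠ 0} fun i => dyadicArc (rdfExp m i) (κ i)

def rdfNet (m : ℕ) : Set (Set Tomega) := {s | ∃ t ∈ Hgrp m, s = t +ᵥ Vset m}

lemma vadd_Vset_eq_rdfCell {m : ℕ} {κ : ℕ → ℕ} {t : Tomega}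
    (ht : ∀ i, rdfExp m i ≠ 0 → t i = dyadicPt (rdfExp m i) (κ i)) :
    t +ᵥ Vset m = rdfCell m κ := by
  ext x
  simp only [Set.mem_vadd_set_iff_neg_vadd_mem, Vset, rdfCell, Set.mem_pi, Set.mem_ofPred_eq]
  refine forall₂_congr fun i hi => ?_
  rw [← dyadicPt_vadd_arc, ← ht i hi, Set.mem_vadd_set_iff_neg_vadd_mem]
  rfl

lemma rdfCell_mem_rdfNet (m : ℕ) (κ : ℕ → ℕ) : rdfCell m κ ∈ rdfNet m :=
  ⟨fun i => dyadicPt (rdfExp m i) (κ i),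
    (AddSubgroup.mem_pi _).2 fun _ _ => dyadicPt_mem_Rsub _ _,
    (vadd_Vset_eq_rdfCell fun _ _ => rfl).symm⟩

lemma exists_eq_rdfCell_of_mem_rdfNet {m : ℕ} {s : Set Tomega} (hs : s ∈ rdfNet m) :
    ∃ κ : ℕ → ℕ, (∀ i, κ i < 2 ^ rdfExp m i) ∧ s = rdfCell m κ := by
  obtain ⟨t, ht, rfl⟩ := hs
  choose κ hκ htκ using fun i =>
    exists_eq_dyadicPt_of_mem_Rsub ((AddSubgroup.mem_pi _).1 ht i trivial)
  exact ⟨κ, hκ, vadd_Vset_eq_rdfCell fun i _ => htκ i⟩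

lemma rdfCell_eq_or_disjoint {m : ℕ} {κ κ' : ℕ → ℕ} (hκ : ∀ i, κ i < 2 ^ rdfExp m i)
    (hκ' : ∀ i, κ' i < 2 ^ rdfExp m i) :
    rdfCell m κ = rdfCell m κ' ∨ Disjoint (rdfCell m κ) (rdfCell m κ') := by
  by_cases h : ∀ i, rdfExp m i ≠ 0 → κ i = κ' i
  · exact Or.inl (Set.pi_congr rfl fun i hi => by rw [h i hi])
  · push Not at h
    obtain ⟨i, hi, hne⟩ := h
    exact Or.inr (Set.disjoint_pi.2 ⟨i, hi, dyadicArc_disjoint (hκ i) (hκ' i) hne⟩)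

lemma eq_or_disjoint_of_mem_rdfNet {m : ℕ} {s s' : Set Tomega} (hs : s ∈ rdfNet m)
    (hs' : s' ∈ rdfNet m) : s = s' ∨ Disjoint s s' := by
  obtain ⟨κ, hκ, rfl⟩ := exists_eq_rdfCell_of_mem_rdfNet hs
  obtain ⟨κ', hκ', rfl⟩ := exists_eq_rdfCell_of_mem_rdfNet hs'
  exact rdfCell_eq_or_disjoint hκ hκ'

lemma rdfCell_subset_rdfCell {k m : ℕ} (hkm : k ≤ m) (κ : ℕ → ℕ) :
    rdfCell m κ ⊆ rdfCell k fun i => κ i / 2 ^ (rdfExp m i - rdfExp k i) := by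
  intro x hx i hi
  have hle : rdfExp k i ≤ rdfExp m i := rdfExp_mono i hkm
  have him : rdfExp m i ≠ 0 := by simp only [Set.mem_ofPred_eq] at hi; omega
  exact dyadicArc_subset_dyadicArc_div hle _ (hx i him)

lemma exists_superset_mem_rdfNet {k m : ℕ} (hkm : k ≤ m) {s : Set Tomega} (hs : s ∈ rdfNet m) :
    ∃ s' ∈ rdfNet k, s ⊆ s' := by
  obtain ⟨κ, -, rfl⟩ := exists_eq_rdfCell_of_mem_rdfNet hs
  exact ⟨_, rdfCell_mem_rdfNet k _, rdfCell_subset_rdfCell hkm κ⟩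

lemma isOpen_of_mem_rdfNet {m : ℕ} {s : Set Tomega} (hs : s ∈ rdfNet m) : IsOpen s := by
  obtain ⟨κ, -, rfl⟩ := exists_eq_rdfCell_of_mem_rdfNet hs
  exact isOpen_set_pi ((Set.finite_lt_nat m).subset fun _ => lt_of_rdfExp_ne_zero)
    fun _ _ => isOpen_arc _ _

lemma nonempty_of_mem_rdfNet {m : ℕ} {s : Set Tomega} (hs : s ∈ rdfNet m) : s.Nonempty := by
  obtain ⟨κ, -, rfl⟩ := exists_eq_rdfCell_of_mem_rdfNet hs
  refine Set.pi_nonempty_iff.2 fun i => ?_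
  obtain ⟨y, hy⟩ := arc_nonempty (div_lt_div_of_pos_right (lt_add_one (κ i : ℝ))
    (by positivity : (0 : ℝ) < 2 ^ rdfExp m i))
  exact ⟨y, fun _ => hy⟩

lemma rdfNet_countable (m : ℕ) : (rdfNet m).Countable := by
  refine (Set.countable_range fun κ : Fin m → ℕ =>
    rdfCell m fun i => if h : i < m then κ ⟨i, h⟩ else 0).mono ?_
  intro s hs
  obtain ⟨κ, -, rfl⟩ := exists_eq_rdfCell_of_mem_rdfNet hs
  exact ⟨fun i => κ i, Set.pi_congr rfl fun i hi => by simp [lt_of_rdfExp_ne_zero hi]⟩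

lemma exists_mem_rdfCell {x : Tomega} (hx : x ∉ dyadicCoordSet) (m : ℕ) : ∃ κ, x ∈ rdfCell m κ := by
  have hxi (i : ℕ) : x i ∉ Set.range (Function.uncurry dyadicPt) := fun h =>
    hx (Set.mem_iUnion.2 ⟨i, h⟩)
  choose κ hκ using fun i => exists_mem_dyadicArc (hxi i) (rdfExp m i)
  exact ⟨κ, fun i _ => hκ i⟩

lemma exists_mem_rdfNet_subset_preimage {x : Tomega} (hx : x ∉ dyadicCoordSet) {i : ℕ}
    {U : Set 𝕋} (hU : IsOpen U) (hxU : x i ∈ U) :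
    ∃ m, ∃ s ∈ rdfNet m, x ∈ s ∧ s ⊆ (fun y : Tomega => y i) ⁻¹' U := by
  obtain ⟨m, hsub, hne⟩ := ((tendsto_rdfExp i).eventually
    (eventually_dyadicArc_subset hU hxU)).and ((tendsto_rdfExp i).eventually_ne_atTop 0) |>.exists
  obtain ⟨κ, hκ⟩ := exists_mem_rdfCell hx m
  exact ⟨m, _, rdfCell_mem_rdfNet m κ, hκ, fun y hy => hsub (κ i) (hκ i hne) (hy i hne)⟩

def rdfFiltration : Filtration ℕ (MeasurableSpace.pi : MeasurableSpace Tomega) where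
  seq m := MeasurableSpace.generateFrom {s | ∃ k ≤ m + 1, s ∈ rdfNet k}
  mono' _ _ hmn := MeasurableSpace.generateFrom_mono fun _ ⟨k, hk, hs⟩ => ⟨k, by omega, hs⟩
  le' _ := MeasurableSpace.generateFrom_le fun _ ⟨_, _, hs⟩ =>
    (isOpen_of_mem_rdfNet hs).measurableSet

lemma measurableSet_rdfFiltration {k m : ℕ} (hk : k ≤ m + 1) {s : Set Tomega}
    (hs : s ∈ rdfNet k) : MeasurableSet[rdfFiltration m] s :=
  MeasurableSpace.measurableSet_generateFrom ⟨k, hk, hs⟩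

lemma subset_or_disjoint_of_mem_rdfNet {m : ℕ} {s A : Set Tomega} (hs : s ∈ rdfNet (m + 1))
    (hA : MeasurableSet[rdfFiltration m] A) : s ⊆ A ∨ Disjoint s A := by
  induction A, hA using MeasurableSpace.generateFrom_induction with
  | hC A hA =>
    obtain ⟨k, hk, hA⟩ := hA
    obtain ⟨s', hs', hss'⟩ := exists_superset_mem_rdfNet hk hs
    rcases eq_or_disjoint_of_mem_rdfNet hs' hA with rfl | h
    · exact Or.inl hss'
    · exact Or.inr (h.mono_left hss')
  | empty => exact Or.inr (Set.disjoint_empty s)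
  | compl A _ h =>
    exact h.symm.imp Set.subset_compl_iff_disjoint_right.2 Set.disjoint_compl_right_iff_subset.2
  | iUnion A _ h =>
    by_cases hsub : ∃ n, s ⊆ A n
    · obtain ⟨n, hn⟩ := hsub
      exact Or.inl (hn.trans (Set.subset_iUnion A n))
    · push Not at hsub
      exact Or.inr (Set.disjoint_iUnion_right.2 fun n => (h n).resolve_left (hsub n))

lemma condExp_rdfFiltration_apply_eq_average (μ : Measure Tomega) [μ.IsAddHaarMeasure]
    {f : Tomega → ℝ} (hf : Integrable f μ) {m : ℕ} {s : Set Tomega} (hs : s ∈ rdfNet (m + 1))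
    {x : Tomega} (hx : x ∈ s) : μ[f|rdfFiltration m] x = (μ s).toReal⁻¹ * ∫ y in s, f y ∂μ :=
  condExp_apply_eq_average_of_atom (rdfFiltration.le m) hf (measurableSet_rdfFiltration le_rfl hs)
    ((isOpen_of_mem_rdfNet hs).measure_ne_zero μ (nonempty_of_mem_rdfNet hs)) (measure_ne_top μ s)
    (fun _ hA => subset_or_disjoint_of_mem_rdfNet hs hA) hx

lemma measurableSet_aeClosure_preimage (μ : Measure Tomega) [μ.IsAddHaarMeasure] (i : ℕ)
    {U : Set 𝕋} (hU : IsOpen U) :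
    MeasurableSet[aeClosure (⨆ m, rdfFiltration m) μ] ((fun x : Tomega => x i) ⁻¹' U) := by
  set P := (fun x : Tomega => x i) ⁻¹' U
  refine ⟨⋃ m, ⋃₀ {s ∈ rdfNet m | s ⊆ P}, ?_, ae_eq_set.2 ⟨?_, ?_⟩⟩
  · refine MeasurableSet.iUnion fun m => MeasurableSet.sUnion
      ((rdfNet_countable m).mono (Set.sep_subset _ _)) fun s hs => ?_
    exact le_iSup (fun m => (rdfFiltration m : MeasurableSpace Tomega)) m s
      (measurableSet_rdfFiltration (Nat.le_succ m) hs.1)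
  · refine measure_mono_null (fun x hx => ?_) (measure_dyadicCoordSet μ)
    by_contra hbad
    obtain ⟨m, s, hs, hxs, hsP⟩ := exists_mem_rdfNet_subset_preimage hbad hU hx.1
    exact hx.2 (Set.mem_iUnion.2 ⟨m, s, ⟨hs, hsP⟩, hxs⟩)
  · rw [Set.sdiff_eq_empty.2 (Set.iUnion_subset fun m => Set.sUnion_subset fun s hs => hs.2),
      measure_empty]

lemma pi_le_aeClosure_iSup_rdfFiltration (μ : Measure Tomega) [μ.IsAddHaarMeasure] :
    (MeasurableSpace.pi : MeasurableSpace Tomega) ≤ aeClosure (⨆ m, rdfFiltration m) μ := by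
  refine iSup_le fun i => MeasurableSpace.comap_le_iff_le_map.2 ?_
  exact BorelSpace.measurable_eq.trans_le
    (MeasurableSpace.generateFrom_le fun _ hU => measurableSet_aeClosure_preimage μ i hU)

theorem R0_differentiates_L1_general (μ : Measure Tomega) [μ.IsAddHaarMeasure]
    (f : Tomega → ℝ) (hf : Integrable f μ) :
    ∀ᵐ x ∂μ, ∀ I : ℕ → Set Tomega,
      (∀ m : ℕ, ∃ t ∈ Hgrp (m + 1), I m = t +ᵥ Vset (m + 1) ∧ x ∈ I m) →
      Filter.Tendsto (fun m => (μ (I m)).toReal⁻¹ * ∫ y in I m, f y ∂μ)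
        Filter.atTop (𝓝 (f x)) := by
  have hsup := condExp_ae_eq_self_of_le_aeClosure (iSup_le rdfFiltration.le)
    (pi_le_aeClosure_iSup_rdfFiltration μ) hf
  filter_upwards [tendsto_ae_condExp (ℱ := rdfFiltration) f, hsup] with x hlim hfx I hI
  rw [← hfx]
  refine hlim.congr fun m => ?_
  obtain ⟨t, ht, hIm, hxI⟩ := hI m
  exact condExp_rdfFiltration_apply_eq_average μ hf ⟨t, ht, hIm⟩ hxI

/-- **The restricted Rubio de Francia basis `ℛ₀` differentiates `L¹(T^ω)`**: for every
`f ∈ L¹(T^ω)` and almost every `x`, if for each `m ≥ 1` the set `I m` is the element of the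
net `𝒩_{m+1} = {t + V_{m+1} : t ∈ H_{m+1}}` containing `x`, then the averages of `f` over
`I m` converge to `f x`. -/
theorem R0_differentiates_L1 (μ : Measure Tomega) [μ.IsAddHaarMeasure]
    [IsProbabilityMeasure μ] (f : Tomega → ℝ) (hf : Integrable f μ) :
    ∀ᵐ x ∂μ, ∀ I : ℕ → Set Tomega,
      (∀ m : ℕ, ∃ t ∈ Hgrp (m + 1), I m = t +ᵥ Vset (m + 1) ∧ x ∈ I m) →
      Filter.Tendsto (fun m => (μ (I m)).toReal⁻¹ * ∫ y in I m, f y ∂μ)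
        Filter.atTop (𝓝 (f x)) :=
  R0_differentiates_L1_general μ f hf
end

section
/- The extended Rubio de Francia basis ℛ* does not differentiate L^∞(T^ω): there exists a measurable set C ⊂ T^ω with 0 < m(C) ≤ 3/4 such that for almost every x ∈ T^ω there is a sequence of intervals I_x^{(p)} ∈ ℛ* containing x with diameters tending to 0 and with m(C ∩ I_x^{(p)})/m(I_x^{(p)}) ≥ 1/2 for all p; consequently the upper derivative of ∫χ_C with respect to ℛ* is ≥ 1/2 almost everywhere, whereas χ_C = 0 on a set of measure ≥ 1/4. -/
open MeasureTheory Filter Topology Pointwise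

/-- The `(m,q)`-cube `□_{m,q} = (0, 2^{-m})^q × T^{q,ω}` in `T^ω`. -/
def cubeSet (m q : ℕ) : Set Tomega := {x | ∀ i < q, x i ∈ arc 0 ((2 : ℝ) ^ m)⁻¹}

/-- The element of `T^ω` whose `j`-th coordinate is `2^{-m}` and all other coordinates `0`;
adding it realizes the translation `τ_j^m`. -/
noncomputable def tauPt (m j : ℕ) : Tomega :=
  fun i => if i = j then ((((2 : ℝ) ^ m)⁻¹ : ℝ) : AddCircle (1 : ℝ)) else 0

/-- The sack `S(Q) = Q ∪ ⋃_{j<q} τ_j^m(Q)` of a set `Q` (0-indexed coordinates `j < q`). -/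
def sack (m q : ℕ) (Q : Set Tomega) : Set Tomega := Q ∪ ⋃ j < q, tauPt m j +ᵥ Q

/-- The double `(m,m)`-cube `W_{m,r} = □_{m,m} ∪ τ_r^m(□_{m,m})` (0-indexed `r < m`). -/
def Wcube (m r : ℕ) : Set Tomega := cubeSet m m ∪ (tauPt m r +ᵥ cubeSet m m)

/-- The extended Rubio de Francia basis `ℛ*`: all translates of the fundamental domains
`V_n` together with all translates of the double cubes `W_{m,r}`. -/
def RStar : Set (Set Tomega) :=
  {S | ∃ y : Tomega, ∃ n : ℕ, 1 ≤ n ∧ S = y +ᵥ Vset n} ∪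
  {S | ∃ y : Tomega, ∃ m r : ℕ, 2 ≤ m ∧ r < m ∧ S = y +ᵥ Wcube m r}

/-!
Fix `m` and cut the first `m` coordinates of `T^ω` into the dyadic cells `k·2^{-m} + □_{m,m}`,
`k ∈ ℤ^m`, and call a cell marked when its weight `∑_{i<m} (i+1) k_i` vanishes modulo `m + 1`.
A cell of nonzero weight `r + 1` is the `τ_r^m`-translate of the marked cell `k - e_r`, so every
point off the null set of points with a rational coordinate lies in a translate of some `W_{m,r}`
whose first half is a marked cell. Shifting the first index by `0, 1, …, m` changes the weight by
`0, 1, …, m`, so it produces `m + 1` disjoint translates of the union of the marked cells, which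
therefore has measure at most `1/(m+1)`. With `m + 1 = 2^{p+2}`, `p = 0, 1, …`, the union `C`
of all marked cells has `μ(C) ≤ 1/2`, while every such point lies in double cubes of diameter
at most `3·2^{-m}` of which `C` fills at least half.
-/

namespace RubioDeFrancia

local notation "𝕋" => AddCircle (1 : ℝ)

theorem card_mul_measure_le_of_pairwise_disjoint_vadd {G ι : Type*} [AddGroup G]
    [MeasurableSpace G] [MeasurableAdd G] (μ : Measure G) [μ.IsAddLeftInvariant] [Fintype ι]
    {s : Set G} (hs : MeasurableSet s) (g : ι → G)
    (hg : Pairwise (Function.onFun Disjoint fun i => g i +ᵥ s)) :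
    Fintype.card ι * μ s ≤ μ Set.univ :=
  calc Fintype.card ι * μ s = ∑' i, μ (g i +ᵥ s) := by simp [measure_vadd, tsum_fintype]
    _ = μ (⋃ i, g i +ᵥ s) := (measure_iUnion hg fun i => hs.const_vadd (g i)).symm
    _ ≤ μ Set.univ := measure_mono (Set.subset_univ _)

theorem half_le_measure_inter_union_div {α : Type*} [MeasurableSpace α] {μ : Measure α}
    [IsFiniteMeasure μ] {A B C : Set α} (hAC : A ⊆ C) (hBA : μ B ≤ μ A) (hA : μ A ≠ 0) :
    1 / 2 ≤ μ (C ∩ (A ∪ B)) / μ (A ∪ B) :=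
  calc 1 / 2 = 1 * μ A / (2 * μ A) := (ENNReal.mul_div_mul_right _ _ hA (measure_ne_top μ A)).symm
    _ ≤ μ (C ∩ (A ∪ B)) / μ (A ∪ B) := by
      rw [one_mul]
      refine ENNReal.div_le_div (measure_mono (Set.subset_inter hAC Set.subset_union_left)) ?_
      exact (measure_union_le A B).trans (by rw [two_mul]; gcongr)

-- This makes Haar measures on the circle atomless (`IsHaarMeasure.nullSingletonClass`).
instance {p : ℝ} [Fact (0 < p)] : Nontrivial (AddCircle p) := by
  refine nontrivial_of_ne ((p / 2 : ℝ) : AddCircle p) ((0 : ℝ) : AddCircle p) fun h => ?_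
  have hp : 0 < p := Fact.out
  have := (AddCircle.coe_eq_coe_iff_of_mem_Ico (a := 0) ⟨by positivity, by linarith⟩
    ⟨le_rfl, by linarith⟩).1 h
  linarith

theorem isOpen_arc (a b : ℝ) : IsOpen (arc a b) :=
  QuotientAddGroup.isOpenMap_coe _ isOpen_Ioo

theorem arc_subset_arc {a b b' : ℝ} (h : b ≤ b') : arc a b ⊆ arc a b' :=
  Set.image_mono (Set.Ioo_subset_Ioo_right h)

theorem norm_sub_le_of_mem_arc {a b : ℝ} {u v : 𝕋} (hu : u ∈ arc a b) (hv : v ∈ arc a b) :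
    ‖u - v‖ ≤ b - a := by
  obtain ⟨s, hs, rfl⟩ := hu
  obtain ⟨t, ht, rfl⟩ := hv
  rw [← AddCircle.coe_sub]
  refine (QuotientAddGroup.norm_mk_le_norm (S := AddSubgroup.zmultiples (1:ℝ))).trans ?_
  rw [Real.norm_eq_abs, abs_le]
  constructor <;> linarith [hs.1, hs.2, ht.1, ht.2]

theorem ae_forall_apply_notMem_of_countable (μ : Measure Tomega) [μ.IsAddHaarMeasure]
    [IsFiniteMeasure μ] {S : Set 𝕋} (hS : S.Countable) : ∀ᵐ x ∂μ, ∀ i, x i ∉ S := by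
  refine ae_all_iff.2 fun i => ?_
  have : (μ.map fun x : Tomega => x i).IsAddHaarMeasure :=
    μ.isAddHaarMeasure_map_of_isFiniteMeasure (Pi.evalAddMonoidHom _ i)
      (continuous_apply i) (Function.surjective_eval i)
  have hnull : μ.map (fun x : Tomega => x i) S = 0 := hS.measure_zero _
  rw [Measure.map_apply (measurable_pi_apply i) hS.measurableSet] at hnull
  exact measure_eq_zero_iff_ae_notMem.1 hnull

noncomputable def cellSide (m : ℕ) : ℝ := ((2 : ℝ) ^ m)⁻¹

theorem cellSide_pos (m : ℕ) : 0 < cellSide m := by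
  unfold cellSide; positivity

theorem two_pow_mul_cellSide (m : ℕ) : (2 : ℝ) ^ m * cellSide m = 1 :=
  mul_inv_cancel₀ (by positivity)

theorem exists_sub_zsmul_mem_arc {z : 𝕋} (hz : z ∉ Set.range fun q : ℚ => ((q : ℝ) : 𝕋))
    (m : ℕ) : ∃ k : ℤ, z - k • ((cellSide m : ℝ) : 𝕋) ∈ arc 0 (cellSide m) := by
  obtain ⟨t, rfl⟩ := QuotientAddGroup.mk_surjective z
  set k := ⌊t * 2 ^ m⌋
  have hk_ne : (k : ℝ) ≠ t * 2 ^ m := fun h =>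
    hz ⟨k / 2 ^ m, by push_cast; rw [h, mul_div_cancel_right₀ _ (by positivity)]⟩
  have hk_lt : (k : ℝ) < t * 2 ^ m := (Int.floor_le _).lt_of_ne hk_ne
  have hlt_k : t * 2 ^ m < k + 1 := Int.lt_floor_add_one _
  have hrepr : t - k * cellSide m = (t * 2 ^ m - k) * cellSide m := by
    linear_combination (-t) * two_pow_mul_cellSide m
  refine ⟨k, t - k * cellSide m, ?_, ?_⟩
  · rw [hrepr]
    exact ⟨mul_pos (by linarith) (cellSide_pos m),
      mul_lt_of_lt_one_left (cellSide_pos m) (by linarith)⟩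
  · rw [← AddCircle.coe_zsmul, zsmul_eq_mul]
    exact AddCircle.coe_sub _ _ _

theorem two_pow_dvd_of_sub_eq_zsmul {m : ℕ} {n : ℤ} {u v : 𝕋} (hu : u ∈ arc 0 (cellSide m))
    (hv : v ∈ arc 0 (cellSide m)) (h : u - v = n • ((cellSide m : ℝ) : 𝕋)) :
    (2 ^ m : ℤ) ∣ n := by
  obtain ⟨s, hs, rfl⟩ := hu
  obtain ⟨t, ht, rfl⟩ := hv
  rw [← AddCircle.coe_sub, ← AddCircle.coe_zsmul, ← sub_eq_zero, ← AddCircle.coe_sub,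
    AddCircle.coe_eq_zero_iff] at h
  obtain ⟨z, hz⟩ := h
  have h2 := two_pow_mul_cellSide m
  simp only [zsmul_eq_mul, mul_one] at hz
  have hw : ((n + z * 2 ^ m : ℤ) : ℝ) = 2 ^ m * s - 2 ^ m * t := by
    push_cast
    linear_combination (2 : ℝ) ^ m * hz - (n : ℝ) * h2
  have hlo : (-1 : ℝ) < ((n + z * 2 ^ m : ℤ) : ℝ) := by
    rw [hw]; nlinarith [hs.1, hs.2, ht.1, ht.2]
  have hhi : ((n + z * 2 ^ m : ℤ) : ℝ) < 1 := by
    rw [hw]; nlinarith [hs.1, hs.2, ht.1, ht.2]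
  have hzero : n + z * 2 ^ m = 0 := by
    have : (-1 : ℤ) < n + z * 2 ^ m := by exact_mod_cast hlo
    have : n + z * 2 ^ m < 1 := by exact_mod_cast hhi
    omega
  exact ⟨-z, by linarith⟩

noncomputable def corner (m : ℕ) (k : ℕ → ℤ) : Tomega := fun i => k i • ((cellSide m : ℝ) : 𝕋)

noncomputable def cell (m : ℕ) (k : ℕ → ℤ) : Set Tomega := corner m k +ᵥ cubeSet m m

theorem corner_add (m : ℕ) (k l : ℕ → ℤ) : corner m (k + l) = corner m k + corner m l :=
  funext fun _ => add_zsmul _ _ _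

theorem tauPt_eq_corner (m r : ℕ) : tauPt m r = corner m (Pi.single r 1) := by
  funext i
  by_cases h : i = r
  · subst h; simp [tauPt, corner, cellSide]
  · simp [tauPt, corner, h]

theorem corner_vadd_cell (m : ℕ) (k l : ℕ → ℤ) : corner m l +ᵥ cell m k = cell m (l + k) := by
  rw [cell, cell, vadd_vadd, corner_add]

theorem corner_vadd_Wcube (m r : ℕ) (k : ℕ → ℤ) :
    corner m k +ᵥ Wcube m r = cell m k ∪ cell m (k + Pi.single r 1) := by
  rw [Wcube, Set.vadd_set_union, tauPt_eq_corner, vadd_vadd, ← corner_add]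
  rfl

theorem isOpen_cubeSet (m q : ℕ) : IsOpen (cubeSet m q) := by
  have : cubeSet m q = ⋂ i ∈ Finset.range q, (fun x : Tomega => x i) ⁻¹' arc 0 (cellSide m) := by
    ext x; simp [cubeSet, cellSide]
  rw [this]
  exact isOpen_biInter_finset fun i _ => (isOpen_arc _ _).preimage (continuous_apply i)

theorem cubeSet_nonempty (m q : ℕ) : (cubeSet m q).Nonempty :=
  ⟨fun _ => ((cellSide m / 2 : ℝ) : 𝕋), fun _ _ => show _ ∈ arc 0 (cellSide m) from
    ⟨cellSide m / 2, ⟨by linarith [cellSide_pos m], by linarith [cellSide_pos m]⟩, rfl⟩⟩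

theorem measure_cubeSet_pos (μ : Measure Tomega) [μ.IsOpenPosMeasure] (m q : ℕ) :
    0 < μ (cubeSet m q) :=
  (isOpen_cubeSet m q).measure_pos μ (cubeSet_nonempty m q)

theorem isOpen_cell (m : ℕ) (k : ℕ → ℤ) : IsOpen (cell m k) :=
  (isOpen_cubeSet m m).vadd _

theorem measure_cell (μ : Measure Tomega) [μ.IsAddLeftInvariant] (m : ℕ) (k : ℕ → ℤ) :
    μ (cell m k) = μ (cubeSet m m) :=
  measure_vadd _ _ _

theorem mem_cell_iff {m : ℕ} {k : ℕ → ℤ} {x : Tomega} :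
    x ∈ cell m k ↔ ∀ i < m, x i - k i • ((cellSide m : ℝ) : 𝕋) ∈ arc 0 (cellSide m) := by
  rw [cell, Set.mem_vadd_set_iff_neg_vadd_mem]
  simp only [cubeSet, Set.mem_ofPred_eq, vadd_eq_add, neg_add_eq_sub]
  rfl

theorem exists_mem_cell {x : Tomega} (hx : ∀ i, x i ∉ Set.range fun q : ℚ => ((q : ℝ) : 𝕋))
    (m : ℕ) : ∃ k, x ∈ cell m k := by
  choose k hk using fun i => exists_sub_zsmul_mem_arc (hx i) m
  exact ⟨k, mem_cell_iff.2 fun i _ => hk i⟩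

theorem two_pow_dvd_sub_of_mem_cell {m : ℕ} {k k' : ℕ → ℤ} {x : Tomega} (hk : x ∈ cell m k)
    (hk' : x ∈ cell m k') {i : ℕ} (hi : i < m) : (2 ^ m : ℤ) ∣ k' i - k i := by
  refine two_pow_dvd_of_sub_eq_zsmul (mem_cell_iff.1 hk i hi) (mem_cell_iff.1 hk' i hi) ?_
  rw [sub_zsmul]
  abel

def weight (m : ℕ) (k : ℕ → ℤ) : ZMod (m + 1) :=
  ∑ i ∈ Finset.range m, ((i + 1 : ℕ) : ZMod (m + 1)) * k i

theorem weight_add (m : ℕ) (k l : ℕ → ℤ) : weight m (k + l) = weight m k + weight m l := by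
  simp only [weight, Pi.add_apply, Int.cast_add, mul_add, Finset.sum_add_distrib]

theorem weight_single {m r : ℕ} (hr : r < m) (c : ℤ) :
    weight m (Pi.single r c) = (r + 1 : ℕ) * c := by
  rw [weight, Finset.sum_eq_single_of_mem r (Finset.mem_range.2 hr)]
  · simp
  · intro i _ hi
    simp [hi]

theorem weight_eq_of_two_pow_dvd {m : ℕ} (hdvd : m + 1 ∣ 2 ^ m) {k k' : ℕ → ℤ}
    (h : ∀ i < m, (2 ^ m : ℤ) ∣ k' i - k i) : weight m k = weight m k' := by
  refine Finset.sum_congr rfl fun i hi => ?_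
  rw [(ZMod.intCast_eq_intCast_iff_dvd_sub _ _ _).2]
  exact (Int.natCast_dvd_natCast.2 hdvd).trans (by exact_mod_cast h i (Finset.mem_range.1 hi))

theorem exists_weight_eq_zero {m : ℕ} (hm : 0 < m) (k : ℕ → ℤ) :
    ∃ kb, weight m kb = 0 ∧ ∃ r < m, k = kb ∨ k = kb + Pi.single r 1 := by
  by_cases h0 : weight m k = 0
  · exact ⟨k, h0, 0, hm, Or.inl rfl⟩
  set s := (weight m k).val with hs
  have hs_pos : 0 < s := Nat.pos_of_ne_zero ((ZMod.val_ne_zero _).2 h0)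
  have hs_lt : s < m + 1 := ZMod.val_lt _
  refine ⟨k + Pi.single (s - 1) (-1), ?_, s - 1, by omega, Or.inr ?_⟩
  · rw [weight_add, weight_single (by omega), Nat.sub_add_cancel hs_pos, hs,
      ZMod.natCast_zmod_val]
    simp
  · rw [add_assoc, ← Pi.single_add]
    simp

def markedSet (m : ℕ) : Set Tomega := ⋃ (k : ℕ → ℤ) (_ : weight m k = 0), cell m k

theorem isOpen_markedSet (m : ℕ) : IsOpen (markedSet m) :=
  isOpen_iUnion fun k => isOpen_iUnion fun _ => isOpen_cell m k

theorem exists_weight_eq_of_mem_vadd_markedSet {m : ℕ} (hm : 0 < m) (j : ZMod (m + 1))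
    {x : Tomega} (hx : x ∈ corner m (Pi.single 0 (j.val : ℤ)) +ᵥ markedSet m) :
    ∃ k, weight m k = j ∧ x ∈ cell m k := by
  obtain ⟨y, hy, rfl⟩ := hx
  obtain ⟨k, hk, hyk⟩ : ∃ k, weight m k = 0 ∧ y ∈ cell m k := by
    simpa only [markedSet, Set.mem_iUnion, exists_prop] using hy
  refine ⟨Pi.single 0 (j.val : ℤ) + k, ?_, ?_⟩
  · rw [weight_add, weight_single hm, hk, add_zero, zero_add, Nat.cast_one, one_mul,
      Int.cast_natCast, ZMod.natCast_zmod_val]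
  · rw [← corner_vadd_cell]
    exact Set.vadd_mem_vadd_set hyk

theorem card_mul_measure_markedSet_le (μ : Measure Tomega) [μ.IsAddLeftInvariant] {m : ℕ}
    (hm : 0 < m) (hdvd : m + 1 ∣ 2 ^ m) : (m + 1 : ENNReal) * μ (markedSet m) ≤ μ Set.univ := by
  have := card_mul_measure_le_of_pairwise_disjoint_vadd μ (isOpen_markedSet m).measurableSet
    (fun j : ZMod (m + 1) => corner m (Pi.single 0 (j.val : ℤ))) fun j j' hjj' => ?_
  · simpa using this
  refine Set.disjoint_left.2 fun x hx hx' => hjj' ?_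
  obtain ⟨k, rfl, hxk⟩ := exists_weight_eq_of_mem_vadd_markedSet hm j hx
  obtain ⟨k', rfl, hxk'⟩ := exists_weight_eq_of_mem_vadd_markedSet hm j' hx'
  exact weight_eq_of_two_pow_dvd hdvd fun i hi => two_pow_dvd_sub_of_mem_cell hxk hxk' hi

-- `level p + 1 = 2^(p+2)` divides `2^(level p)`, so the weight of a cell does not depend on the
-- choice of `k`, and `∑ₚ 1/(level p + 1) = 1/2`.
def level (p : ℕ) : ℕ := 2 ^ (p + 2) - 1

theorem level_add_one (p : ℕ) : level p + 1 = 2 ^ (p + 2) :=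
  Nat.sub_add_cancel Nat.one_le_two_pow

theorem add_two_le_level (p : ℕ) : p + 2 ≤ level p := by
  have := Nat.lt_two_pow_self (n := p + 2)
  unfold level
  omega

theorem two_le_level (p : ℕ) : 2 ≤ level p :=
  le_add_self.trans (add_two_le_level p)

theorem level_add_one_dvd (p : ℕ) : level p + 1 ∣ 2 ^ level p := by
  rw [level_add_one]
  exact pow_dvd_pow 2 (add_two_le_level p)

def markedSetUnion : Set Tomega := ⋃ p, markedSet (level p)

theorem measurableSet_markedSetUnion : MeasurableSet markedSetUnion :=
  (isOpen_iUnion fun p => isOpen_markedSet (level p)).measurableSet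

theorem cell_subset_markedSetUnion {p : ℕ} {k : ℕ → ℤ} (hk : weight (level p) k = 0) :
    cell (level p) k ⊆ markedSetUnion :=
  Set.subset_iUnion_of_subset p (Set.subset_iUnion₂_of_subset k hk le_rfl)

theorem measure_markedSetUnion_pos (μ : Measure Tomega) [μ.IsAddHaarMeasure] :
    0 < μ markedSetUnion :=
  (measure_cubeSet_pos μ _ _).trans_le <| by
    rw [← measure_cell μ (level 0) 0]
    exact measure_mono (cell_subset_markedSetUnion (by simp [weight]))

theorem measure_markedSetUnion_le (μ : Measure Tomega) [μ.IsAddLeftInvariant]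
    [IsProbabilityMeasure μ] :
    μ markedSetUnion ≤ 2⁻¹ := by
  have hp : ∀ p, μ (markedSet (level p)) ≤ 2⁻¹ ^ (p + 2) := fun p => by
    have := card_mul_measure_markedSet_le μ (Nat.zero_lt_of_lt (two_le_level p))
      (level_add_one_dvd p)
    rw [measure_univ, ← Nat.cast_add_one, level_add_one, mul_comm,
      ← ENNReal.le_inv_iff_mul_le] at this
    simpa [ENNReal.inv_pow] using this
  calc μ markedSetUnion ≤ ∑' p, μ (markedSet (level p)) := measure_iUnion_le _
    _ ≤ ∑' p : ℕ, 2⁻¹ ^ (p + 2) := ENNReal.tsum_le_tsum hp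
    _ = 2⁻¹ := by
      simp_rw [pow_succ _ (_ + 1)]
      rw [ENNReal.tsum_mul_right, ENNReal.tsum_geometric_add_one, ENNReal.one_sub_inv_two,
        inv_inv, ENNReal.mul_inv_cancel_right two_ne_zero ENNReal.ofNat_ne_top]

theorem Dmet_le_of_forall_lt {u v : Tomega} {m : ℕ} {a : ℝ} (ha : 0 ≤ a)
    (h : ∀ n < m, ‖u n - v n‖ ≤ a) : Dmet u v ≤ a + cellSide m := by
  set f : ℕ → ℝ := fun n => ‖u n - v n‖ / 2 ^ (n + 1)
  have hf_le : ∀ n, f n ≤ 2⁻¹ / 2 / 2 ^ n := fun n => by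
    rw [div_div, ← pow_succ']
    show ‖u n - v n‖ / _ ≤ _
    gcongr
    simpa using AddCircle.norm_le_half_period (1 : ℝ) one_ne_zero (x := u n - v n)
  have hf : Summable f :=
    (summable_geometric_two' _).of_nonneg_of_le (fun n => by positivity) hf_le
  have head : ∑ n ∈ Finset.range m, f n ≤ a :=
    calc ∑ n ∈ Finset.range m, f n ≤ ∑ n ∈ Finset.range m, a / 2 / 2 ^ n :=
          Finset.sum_le_sum fun n hn => by
            rw [div_div, ← pow_succ']
            show ‖u n - v n‖ / _ ≤ _
            gcongr
            exact h n (Finset.mem_range.1 hn)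
      _ ≤ ∑' n, a / 2 / 2 ^ n :=
          (summable_geometric_two' a).sum_le_tsum _ fun n _ => by positivity
      _ = a := tsum_geometric_two' a
  have tail : ∑' n, f (n + m) ≤ cellSide m :=
    calc ∑' n, f (n + m) ≤ ∑' n, cellSide m / 2 / 2 ^ n :=
          ((summable_nat_add_iff m).2 hf).tsum_le_tsum (fun n => (hf_le _).trans <| by
            rw [cellSide, pow_add]
            field_simp
            norm_num) (summable_geometric_two' _)
      _ = cellSide m := tsum_geometric_two' _
  rw [Dmet, ← hf.sum_add_tsum_nat_add m]
  linarith

theorem mem_arc_of_mem_Wcube {m r : ℕ} {w : Tomega} (hw : w ∈ Wcube m r) {n : ℕ} (hn : n < m) :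
    w n ∈ arc 0 (2 * cellSide m) := by
  have hδ := cellSide_pos m
  rcases hw with hw | ⟨c, hc, rfl⟩
  · exact arc_subset_arc (by linarith) (show w n ∈ arc 0 (cellSide m) from hw n hn)
  obtain ⟨t, ht, hct⟩ : c n ∈ arc 0 (cellSide m) := hc n hn
  replace hct : ((t : ℝ) : 𝕋) = c n := hct
  by_cases h : n = r
  · refine ⟨cellSide m + t, ⟨by linarith [ht.1], by linarith [ht.2]⟩, ?_⟩
    subst h
    simp [tauPt, hct, cellSide]
  · refine ⟨t, ⟨ht.1, by linarith [ht.2]⟩, ?_⟩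
    simp [tauPt, h, hct]

theorem Dmet_le_of_mem_vadd_Wcube {m r : ℕ} {y u v : Tomega} (hu : u ∈ y +ᵥ Wcube m r)
    (hv : v ∈ y +ᵥ Wcube m r) : Dmet u v ≤ 3 * cellSide m := by
  obtain ⟨w, hw, rfl⟩ := hu
  obtain ⟨w', hw', rfl⟩ := hv
  have := Dmet_le_of_forall_lt (u := y +ᵥ w) (v := y +ᵥ w') (a := 2 * cellSide m)
    (by linarith [cellSide_pos m]) fun n hn => by
      rw [vadd_eq_add, vadd_eq_add, Pi.add_apply, Pi.add_apply, add_sub_add_left_eq_sub]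
      simpa using norm_sub_le_of_mem_arc (mem_arc_of_mem_Wcube hw hn) (mem_arc_of_mem_Wcube hw' hn)
  exact this.trans_eq (by ring)

theorem tendsto_three_mul_cellSide_level :
    Tendsto (fun p => 3 * cellSide (level p)) atTop (𝓝 0) := by
  have hlevel : Tendsto level atTop atTop :=
    tendsto_atTop_mono (fun p => (by linarith [add_two_le_level p] : p ≤ level p)) tendsto_id
  have := ((tendsto_pow_atTop_nhds_zero_of_lt_one (by norm_num : (0 : ℝ) ≤ 2⁻¹)
    (by norm_num)).comp hlevel).const_mul 3
  simpa [cellSide, Function.comp_def, inv_pow] using this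

theorem exists_mem_RStar_half_le_measure_markedSetUnion_inter_div (μ : Measure Tomega)
    [μ.IsAddHaarMeasure] [IsFiniteMeasure μ] {x : Tomega}
    (hx : ∀ i, x i ∉ Set.range fun q : ℚ => ((q : ℝ) : 𝕋)) (p : ℕ) :
    ∃ I ∈ RStar, x ∈ I ∧ (∀ u ∈ I, ∀ v ∈ I, Dmet u v ≤ 3 * cellSide (level p)) ∧
      1 / 2 ≤ μ (markedSetUnion ∩ I) / μ I := by
  obtain ⟨k, hxk⟩ := exists_mem_cell hx (level p)
  obtain ⟨kb, hkb, r, hr, hk⟩ := exists_weight_eq_zero (Nat.zero_lt_of_lt (two_le_level p)) k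
  have hI := corner_vadd_Wcube (level p) r kb
  refine ⟨corner (level p) kb +ᵥ Wcube (level p) r, Or.inr ⟨_, _, r, two_le_level p, hr, rfl⟩,
    ?_, fun u hu v hv => Dmet_le_of_mem_vadd_Wcube hu hv, ?_⟩
  · rw [hI]
    rcases hk with rfl | rfl
    exacts [Or.inl hxk, Or.inr hxk]
  · rw [hI]
    refine half_le_measure_inter_union_div (cell_subset_markedSetUnion hkb) ?_ ?_
    · rw [measure_cell, measure_cell]
    · rw [measure_cell]
      exact (measure_cubeSet_pos μ _ _).ne'

end RubioDeFrancia

open RubioDeFrancia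

/-- **The extended Rubio de Francia basis `ℛ*` does not differentiate `L^∞(T^ω)`.** There is
a measurable set `C` with `0 < m(C) ≤ 3/4` (so `m(Cᶜ) ≥ 1/4`) such that for almost every
`x ∈ T^ω` there is a sequence of sets `I p ∈ ℛ*` containing `x`, of diameters tending to `0`,
with `m(C ∩ I p)/m(I p) ≥ 1/2` for all `p`; hence the upper derivative of `∫ χ_C` with
respect to `ℛ*` is `≥ 1/2` a.e. while `χ_C = 0` on a set of measure `≥ 1/4`. -/
theorem RStar_does_not_differentiate_Linfty (μ : Measure Tomega) [μ.IsAddHaarMeasure]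
    [IsProbabilityMeasure μ] :
    ∃ C : Set Tomega, MeasurableSet C ∧ 0 < μ C ∧ μ C ≤ 3 / 4 ∧
      (1 : ENNReal) / 4 ≤ μ Cᶜ ∧
      ∀ᵐ x ∂μ, ∃ (I : ℕ → Set Tomega) (ε : ℕ → ℝ),
        Filter.Tendsto ε Filter.atTop (𝓝 0) ∧
        ∀ p : ℕ, I p ∈ RStar ∧ x ∈ I p ∧
          (∀ u ∈ I p, ∀ v ∈ I p, Dmet u v ≤ ε p) ∧
          (1 : ENNReal) / 2 ≤ μ (C ∩ I p) / μ (I p) := by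
  have hC := measure_markedSetUnion_le μ
  refine ⟨markedSetUnion, measurableSet_markedSetUnion, measure_markedSetUnion_pos μ,
    hC.trans ?_, ?_, ?_⟩
  · rw [← ENNReal.toReal_le_toReal (by norm_num) (ENNReal.div_ne_top (by norm_num) (by norm_num))]
    norm_num
  · rw [prob_compl_eq_one_sub measurableSet_markedSetUnion]
    calc (1 : ENNReal) / 4 ≤ 1 - 2⁻¹ := by
          rw [ENNReal.one_sub_inv_two, one_div]
          exact ENNReal.inv_le_inv.2 (by norm_num)
      _ ≤ 1 - μ markedSetUnion := tsub_le_tsub_left hC 1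
  · have hrat := ae_forall_apply_notMem_of_countable μ
      (Set.countable_range fun q : ℚ => ((q : ℝ) : AddCircle (1 : ℝ)))
    filter_upwards [hrat] with x hx
    choose I hI using exists_mem_RStar_half_le_measure_markedSetUnion_inter_div μ hx
    exact ⟨I, _, tendsto_three_mul_cellSide_level, hI⟩
end
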